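/- arXiv:1312.1234 — 4 statements merged into one kernel-verified Lean document; each statement's English description precedes it below -/
import Mathlib

section
/- Let T be a finite tree and let u and v be endvertices of T such that T − u is isomorphic to T − v. Then u and v are similar in T, i.e. there is an automorphism of T mapping u to v. -/
/-!
Induction on the number of vertices. Let `u₁`, `v₁` be the neighbours of the endvertices `u`,
`v`. It suffices to find an isomorphism `g : T - u ≃g T - v` with `g v = u`: it restricts to an
automorphism `s` of the tree `T - u - v` with `s v₁ = u₁`. Every automorphism of a finite tree
fixes a vertex or inverts an edge; exchanging two branches at the fixed vertex, or the two halves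
at the inverted edge, along `s` gives an automorphism `t` of `T - u - v` swapping `v₁` and `u₁`,
and `t` extended by `u ↔ v` is the required automorphism of `T`.

If the given `f : T - u ≃g T - v` does not send `v` to `u`, then `u` and `f v` are endvertices of
the smaller tree `T - v` whose deletions are both isomorphic to `T - u - v`. By induction some
automorphism `β` of `T - v` maps `u` to `f v`, and `g = β⁻¹ ∘ f` works.
-/

open SimpleGraph

namespace ErnPaper

/-- The weight of a vertex `v` in a graph `G`: the number of vertices in a largest
connected component of `G - v`. -/
noncomputable def wt {V : Type} [Fintype V] (G : SimpleGraph V) (v : V) : ℕ :=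
  sSup {n | ∃ c : (G.induce ({v}ᶜ : Set V)).ConnectedComponent, n = Nat.card c.supp}

/-- The centroid of a graph: the set of vertices of minimum weight. -/
def centroid {V : Type} [Fintype V] (G : SimpleGraph V) : Set V :=
  {v | ∀ u, wt G v ≤ wt G u}

/-- The edge-reconstruction number of a finite graph `G`: the least `k` for which there exist
`k` distinct edges `e₁, …, e_k` of `G` such that any finite graph `H` having `k` distinct
edges `f₁, …, f_k` with `H - fᵢ ≅ G - eᵢ` for all `i` must be isomorphic to `G`. -/
noncomputable def ern {V : Type} [Fintype V] (G : SimpleGraph V) : ℕ :=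
  sInf {k | ∃ s : Finset (Sym2 V), s.card = k ∧ (↑s : Set (Sym2 V)) ⊆ G.edgeSet ∧
    ∀ (W : Type) (_ : Fintype W) (H : SimpleGraph W) (t : Finset (Sym2 W)),
      (↑t : Set (Sym2 W)) ⊆ H.edgeSet →
      (∃ φ : {e // e ∈ s} ≃ {f // f ∈ t},
        ∀ e : {e // e ∈ s},
          Nonempty (H.deleteEdges {(φ e).1} ≃g G.deleteEdges {e.1})) →
      Nonempty (H ≃g G)}

/-- The spider tree `S_{p,q,r}`: three paths with `p`, `q`, `r` edges respectively,
emanating from a common central vertex. -/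
def spider (p q r : ℕ) : SimpleGraph (Unit ⊕ (Fin p ⊕ Fin q ⊕ Fin r)) :=
  SimpleGraph.fromRel fun x y =>
    match x, y with
    | Sum.inl _, Sum.inr (Sum.inl j) => (j : ℕ) = 0
    | Sum.inl _, Sum.inr (Sum.inr (Sum.inl j)) => (j : ℕ) = 0
    | Sum.inl _, Sum.inr (Sum.inr (Sum.inr j)) => (j : ℕ) = 0
    | Sum.inr (Sum.inl i), Sum.inr (Sum.inl j) => (j : ℕ) = (i : ℕ) + 1
    | Sum.inr (Sum.inr (Sum.inl i)), Sum.inr (Sum.inr (Sum.inl j)) => (j : ℕ) = (i : ℕ) + 1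
    | Sum.inr (Sum.inr (Sum.inr i)), Sum.inr (Sum.inr (Sum.inr j)) => (j : ℕ) = (i : ℕ) + 1
    | _, _ => False

/-- A pseudopath: a tree isomorphic to a path `P_k`, to `S_{1,1,2}`, or to `S_{1,2,3}`. -/
def IsPseudopath {V : Type} (T : SimpleGraph V) : Prop :=
  (∃ k, Nonempty (T ≃g pathGraph k)) ∨
    Nonempty (T ≃g spider 1 1 2) ∨ Nonempty (T ≃g spider 1 2 3)

/-- `T - xv + yv`: delete the end-edge `xv` and add the new edge `yv`. -/
def replaceEdge {V : Type} (T : SimpleGraph V) (x v y : V) : SimpleGraph V :=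
  SimpleGraph.fromEdgeSet ((T.edgeSet \ {s(x, v)}) ∪ {s(y, v)})

/-- The disjoint union of two simple graphs. -/
def disjUnion {α β : Type} (G : SimpleGraph α) (H : SimpleGraph β) :
    SimpleGraph (α ⊕ β) :=
  SimpleGraph.fromRel fun x y =>
    match x, y with
    | Sum.inl a, Sum.inl b => G.Adj a b
    | Sum.inr a, Sum.inr b => H.Adj a b
    | _, _ => False

/-- The caterpillar `C(2,0,…,0,2)` with spine on `m` vertices: spine path `v₀ … v_{m-1}`,
with two extra endvertices adjacent to `v₀` and two to `v_{m-1}`. -/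
def doubleBroom (m : ℕ) : SimpleGraph (Fin m ⊕ Fin 4) :=
  SimpleGraph.fromRel fun x y =>
    match x, y with
    | Sum.inl i, Sum.inl j => (j : ℕ) = (i : ℕ) + 1
    | Sum.inl i, Sum.inr l =>
        ((i : ℕ) = 0 ∧ (l : ℕ) < 2) ∨ ((i : ℕ) = m - 1 ∧ 2 ≤ (l : ℕ))
    | _, _ => False

end ErnPaper

open Classical in
theorem Equiv.involutive_ite_mem {V : Type*} (s : V ≃ V) {A B : Set V} (hAB : Disjoint A B)
    (hs : ∀ w, s w ∈ B ↔ w ∈ A) :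
    Function.Involutive fun w => if w ∈ A then s w else if w ∈ B then s.symm w else w := by
  intro w
  by_cases hA : w ∈ A
  · simp [hA, (hs w).mpr hA, Set.disjoint_right.mp hAB ((hs w).mpr hA)]
  by_cases hB : w ∈ B
  · have : s.symm w ∈ A := by rw [← hs, s.apply_symm_apply]; exact hB
    simp [hA, hB, this]
  · simp [hA, hB]

namespace SimpleGraph

variable {V W : Type*} {G : SimpleGraph V} {H : SimpleGraph W}

variable (G) in
def side (p q : V) : Set V := {w | (G.deleteEdges {s(p, q)}).Reachable q w}

section Side

variable {p q a b w : V}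

lemma right_mem_side : q ∈ G.side p q := Reachable.refl q

lemma mem_side_of_adj (ha : a ∈ G.side p q) (h : G.Adj a b) (hne : s(a, b) ≠ s(p, q)) :
    b ∈ G.side p q :=
  ha.trans (Adj.reachable (by simp [h, hne]))

lemma IsAcyclic.left_notMem_side (hG : G.IsAcyclic) (h : G.Adj p q) : p ∉ G.side p q :=
  fun hp => isAcyclic_iff_forall_adj_isBridge.mp hG h hp.symm

lemma IsAcyclic.eq_of_mem_side_of_notMem_side (hG : G.IsAcyclic) (ha : a ∈ G.side p q)
    (hb : b ∉ G.side p q) (h : G.Adj a b) : a = q ∧ b = p := by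
  have : s(a, b) = s(p, q) := by_contra fun hne => hb (mem_side_of_adj ha h hne)
  rcases Sym2.eq_iff.mp this with ⟨rfl, rfl⟩ | hqp
  · exact absurd ha (hG.left_notMem_side h)
  · exact hqp

lemma IsAcyclic.disjoint_side (hG : G.IsAcyclic) (h : G.Adj p q) :
    Disjoint (G.side p q) (G.side q p) := by
  refine Set.disjoint_left.mpr fun w hq hp => hG.left_notMem_side h ?_
  rw [side, Sym2.eq_swap] at hp
  exact hq.trans hp.symm

lemma Preconnected.mem_side_or_mem_side (hG : G.Preconnected) (p q w : V) :
    w ∈ G.side p q ∨ w ∈ G.side q p := by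
  by_contra hw
  obtain ⟨d, -, hd, hd'⟩ := (hG q w).some.exists_boundary_dart (G.side p q ∪ G.side q p)
    (Or.inl right_mem_side) hw
  by_cases he : s(d.fst, d.snd) = s(p, q)
  · rcases Sym2.eq_iff.mp he with ⟨-, h⟩ | ⟨-, h⟩
    · exact hd' (Or.inl (h ▸ right_mem_side))
    · exact hd' (Or.inr (h ▸ right_mem_side))
  · refine hd' (hd.imp (mem_side_of_adj · d.adj he) (mem_side_of_adj · d.adj ?_))
    rwa [Sym2.eq_swap (a := q)]

lemma IsAcyclic.side_subset_side (hG : G.IsAcyclic) {a b c : V} (hcb : G.Adj c b) (hab : a ≠ b) :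
    G.side c b ⊆ G.side a c := by
  intro w ⟨W⟩
  have hb : b ∈ G.side a c := mem_side_of_adj right_mem_side hcb (by
    rw [Ne, Sym2.eq_iff]; rintro (⟨-, rfl⟩ | ⟨-, rfl⟩); exacts [hcb.ne rfl, hab rfl])
  by_contra hw
  obtain ⟨d, hdW, hd, hd'⟩ := W.exists_boundary_dart _ hb hw
  obtain ⟨hc, -⟩ := hG.eq_of_mem_side_of_notMem_side hd hd' d.adj.1
  classical
  have hcW := W.dart_fst_mem_support_of_mem_darts hdW
  rw [hc] at hcW
  exact hG.left_notMem_side hcb ⟨W.takeUntil c hcW⟩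

lemma Iso.apply_mem_side_of_mem (f : G ≃g H) (hw : w ∈ G.side p q) :
    f w ∈ H.side (f p) (f q) := by
  refine hw.map (f := ⟨f, fun {x y} hxy => ?_⟩)
  simp only [deleteEdges_adj, Set.mem_singleton_iff] at hxy ⊢
  refine ⟨f.map_adj_iff.mpr hxy.1, fun he => hxy.2 ?_⟩
  rw [← Sym2.map_mk, ← Sym2.map_mk] at he
  exact Sym2.map.injective f.injective he

lemma Iso.apply_mem_side_iff (f : G ≃g H) : f w ∈ H.side (f p) (f q) ↔ w ∈ G.side p q :=
  ⟨fun h => by simpa using f.symm.apply_mem_side_of_mem h, f.apply_mem_side_of_mem⟩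

end Side

def Iso.ofInvolutive (f : V → V) (hf : Function.Involutive f)
    (hadj : ∀ {a b}, G.Adj a b → G.Adj (f a) (f b)) : G ≃g G where
  toEquiv := hf.toPerm f
  map_rel_iff' := ⟨fun h => by simpa only [Function.Involutive.coe_toPerm, hf _] using hadj h, hadj⟩

open Classical in
theorem IsAcyclic.exists_iso_swap_of_mem_side (hG : G.IsAcyclic) (s : G ≃g G) {p q x : V}
    (hpq : G.Adj p q) (hs : s p = p ∨ s p = q ∧ s q = p)
    (hdisj : Disjoint (G.side p q) (G.side (s p) (s q))) (hx : x ∈ G.side p q) :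
    ∃ t : G ≃g G, t x = s x ∧ t (s x) = x := by
  set A := G.side p q
  set B := G.side (s p) (s q)
  -- `pq` and its image are the only edges leaving `A` and `B`, and `f p = s p` handles both.
  let f : V → V := fun w => if w ∈ A then s w else if w ∈ B then s.symm w else w
  have hsB : ∀ w, s w ∈ B ↔ w ∈ A := fun w => s.apply_mem_side_iff
  have hinv : Function.Involutive f := s.toEquiv.involutive_ite_mem hdisj hsB
  have hfA : ∀ {w}, w ∈ A → f w = s w := fun hw => if_pos hw
  have hfB : ∀ {w}, w ∈ B → f w = s.symm w := fun hw => by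
    simp only [f, if_neg (Set.disjoint_right.mp hdisj hw), if_pos hw]
  have hfO : ∀ {w}, w ∉ A → w ∉ B → f w = w := fun h₁ h₂ => by simp only [f, if_neg h₁, if_neg h₂]
  have hfp : f p = s p := by
    rcases hs with hsp | ⟨hsp, hsq⟩
    · have hpB : p ∉ B := hsp ▸ hG.left_notMem_side (s.map_adj_iff.mpr hpq)
      rw [hfO (hG.left_notMem_side hpq) hpB, hsp]
    · have hpB : p ∈ B := hsq ▸ right_mem_side
      rw [hfB hpB, hsp, ← hsq, s.symm_apply_apply]
  have hfsp : f (s p) = p := by rw [← hfp, hinv]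
  have key : ∀ {a b}, G.Adj a b → a ∈ A ∨ a ∈ B → G.Adj (f a) (f b) := by
    rintro a b h (ha | ha)
    · by_cases hb : b ∈ A
      · rw [hfA ha, hfA hb]; exact s.map_adj_iff.mpr h
      · obtain ⟨rfl, rfl⟩ := hG.eq_of_mem_side_of_notMem_side ha hb h
        rw [hfA ha, hfp]; exact s.map_adj_iff.mpr h
    · by_cases hb : b ∈ B
      · rw [hfB ha, hfB hb]; exact s.symm.map_adj_iff.mpr h
      · obtain ⟨rfl, rfl⟩ := hG.eq_of_mem_side_of_notMem_side ha hb h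
        rw [hfB ha, s.symm_apply_apply, hfsp]; exact hpq.symm
  have hadj : ∀ {a b}, G.Adj a b → G.Adj (f a) (f b) := by
    intro a b h
    by_cases ha : a ∈ A ∨ a ∈ B
    · exact key h ha
    by_cases hb : b ∈ A ∨ b ∈ B
    · exact (key h.symm hb).symm
    simp only [not_or] at ha hb
    rw [hfO ha.1 ha.2, hfO hb.1 hb.2]; exact h
  refine ⟨Iso.ofInvolutive f hinv hadj, hfA hx, ?_⟩
  change f (s x) = x
  rw [hfB ((hsB x).mpr hx), s.symm_apply_apply]

lemma Connected.exists_adj_mem_side_dist_lt (hG : G.Connected) {c x : V} (hcx : c ≠ x) :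
    ∃ a, G.Adj c a ∧ x ∈ G.side c a ∧ G.dist a x < G.dist c x := by
  obtain ⟨p, hp⟩ := hG.exists_walk_length_eq_dist c x
  have hpath := p.isPath_of_length_eq_dist hp
  cases p with
  | nil => exact absurd rfl hcx
  | @cons _ a _ h p =>
    rw [Walk.cons_isPath_iff] at hpath
    refine ⟨a, h, reachable_deleteEdges_iff_exists_walk.mpr
      ⟨p, fun he => hpath.2 (p.fst_mem_support_of_mem_edges he)⟩, ?_⟩
    have := dist_le p
    rw [Walk.length_cons] at hp
    omega

theorem IsTree.exists_iso_swap_of_apply_eq_self (hT : G.IsTree) (s : G ≃g G) {c : V}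
    (hc : s c = c) (x : V) : ∃ t : G ≃g G, t x = s x ∧ t (s x) = x := by
  induction hn : G.dist c x using Nat.strong_induction_on generalizing c with
  | _ n ih =>
  rcases eq_or_ne c x with rfl | hcx
  · exact ⟨.refl, by simp [hc]⟩
  obtain ⟨a, hca, hx, hlt⟩ := hT.connected.exists_adj_mem_side_dist_lt hcx
  by_cases ha : s a = a
  · exact ih _ (hn ▸ hlt) ha rfl
  refine hT.isAcyclic.exists_iso_swap_of_mem_side s hca (.inl hc) ?_ hx
  have hcsa : G.Adj c (s a) := hc ▸ s.map_adj_iff.mpr hca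
  rw [hc]
  exact (hT.isAcyclic.disjoint_side hca).mono_right
    (hT.isAcyclic.side_subset_side hcsa (Ne.symm ha))

lemma Iso.subsingleton_neighborSet_iff (f : G ≃g H) (v : V) :
    (H.neighborSet (f v)).Subsingleton ↔ (G.neighborSet v).Subsingleton := by
  rw [← Set.subsingleton_coe, ← Set.subsingleton_coe, (f.mapNeighborSet v).subsingleton_congr]

lemma Preconnected.exists_apply_eq_self_or_inverted_edge_of_subsingleton [Nonempty V]
    (hG : G.Preconnected) (hs : ∀ v, (G.neighborSet v).Subsingleton) (s : G ≃g G) :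
    (∃ c, s c = c) ∨ ∃ c c', G.Adj c c' ∧ s c = c' ∧ s c' = c := by
  obtain ⟨v⟩ := ‹Nonempty V›
  by_cases hv : s v = v
  · exact .inl ⟨v, hv⟩
  obtain ⟨p, hp⟩ := hG.exists_isPath v (s v)
  have hnil : ¬p.Nil := Walk.not_nil_of_ne (Ne.symm hv)
  have hsnd : p.snd = s v := by
    by_contra h
    exact hp.isTrail.not_mem_support_of_subsingleton_neighborSet (p.adj_snd hnil).ne' h (hs _)
      (p.getVert_mem_support 1)
  have hadj : G.Adj v (s v) := hsnd ▸ p.adj_snd hnil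
  exact .inr ⟨v, s v, hadj, rfl, hs (s v) (s.map_adj_iff.mpr hadj) hadj.symm⟩

lemma IsTree.induce_of_subsingleton_neighborSet (hG : G.IsTree) {s : Set V}
    (hs : ∀ v ∉ s, (G.neighborSet v).Subsingleton) (hne : s.Nonempty) : (G.induce s).IsTree :=
  ⟨(connected_iff _).mpr ⟨hG.connected.preconnected.induce_of_degree_eq_one hs, hne.to_subtype⟩,
    hG.isAcyclic.induce s⟩

lemma IsTree.exists_subsingleton_neighborSet [Finite V] (hG : G.IsTree) :
    ∃ v, (G.neighborSet v).Subsingleton := by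
  classical
  have := Fintype.ofFinite V
  cases subsingleton_or_nontrivial V with
  | inl _ => exact ⟨hG.connected.nonempty.some, Set.subsingleton_of_subsingleton⟩
  | inr _ =>
    obtain ⟨v, hv⟩ := hG.exists_vert_degree_one_of_nontrivial
    obtain ⟨w, -, hw⟩ := degree_eq_one_iff_existsUnique_adj.mp hv
    exact ⟨v, fun a ha b hb => (hw a ha).trans (hw b hb).symm⟩

theorem IsTree.exists_apply_eq_self_or_inverted_edge [Finite V] (hT : G.IsTree) (s : G ≃g G) :
    (∃ c, s c = c) ∨ ∃ c c', G.Adj c c' ∧ s c = c' ∧ s c' = c := by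
  induction hn : Nat.card V using Nat.strong_induction_on generalizing V with
  | _ n ih =>
  have := hT.connected.nonempty
  set S := {w | ¬(G.neighborSet w).Subsingleton}
  rcases S.eq_empty_or_nonempty with hS | hS
  · refine hT.connected.preconnected.exists_apply_eq_self_or_inverted_edge_of_subsingleton
      (fun v => not_not.mp fun hv => hS.subset hv) s
  have hST : (G.induce S).IsTree :=
    hT.induce_of_subsingleton_neighborSet (fun v hv => not_not.mp hv) hS
  have hsS : Set.BijOn s S S :=
    s.toEquiv.bijOn fun v => not_congr (s.subsingleton_neighborSet_iff v)
  have hlt : Nat.card S < n := by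
    obtain ⟨l, hl⟩ := hT.exists_subsingleton_neighborSet
    rw [← hn, Nat.card_coe_set_eq]
    exact Set.ncard_lt_card fun h => (h ▸ Set.mem_univ l : l ∈ S) hl
  rcases ih _ hlt hST (s.induce hsS) rfl with ⟨c, hc⟩ | ⟨c, c', h, hc, hc'⟩
  · exact .inl ⟨c, congrArg Subtype.val hc⟩
  · exact .inr ⟨c, c', h, congrArg Subtype.val hc, congrArg Subtype.val hc'⟩

theorem IsTree.exists_iso_swap [Finite V] (hT : G.IsTree) (s : G ≃g G) (x : V) :
    ∃ t : G ≃g G, t x = s x ∧ t (s x) = x := by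
  rcases hT.exists_apply_eq_self_or_inverted_edge s with ⟨c, hc⟩ | ⟨c, c', h, hc, hc'⟩
  · exact hT.exists_iso_swap_of_apply_eq_self s hc x
  rcases hT.connected.preconnected.mem_side_or_mem_side c c' x with hx | hx
  · refine hT.isAcyclic.exists_iso_swap_of_mem_side s h (.inr ⟨hc, hc'⟩) ?_ hx
    rw [hc, hc']
    exact hT.isAcyclic.disjoint_side h
  · refine hT.isAcyclic.exists_iso_swap_of_mem_side s h.symm (.inr ⟨hc', hc⟩) ?_ hx
    rw [hc, hc']
    exact hT.isAcyclic.disjoint_side h.symm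

def Iso.induceComplSingleton (f : G ≃g H) {a : V} {b : W} (h : f a = b) :
    G.induce {a}ᶜ ≃g H.induce {b}ᶜ :=
  f.induce (f.toEquiv.bijOn fun w => by simp [← h])

def induceComplInduceComplIso (a : V) (b : ({a}ᶜ : Set V)) {s : Set V}
    (hs : ∀ w, w ∈ s ↔ w ≠ a ∧ w ≠ b) :
    (G.induce {a}ᶜ).induce ({b}ᶜ : Set ({a}ᶜ : Set V)) ≃g G.induce s where
  toEquiv := (Equiv.subtypeSubtypeEquivSubtypeExists _ _).trans
    (Equiv.subtypeEquivRight fun w => by simp [hs, Subtype.ext_iff])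
  map_rel_iff' := Iff.rfl

lemma Iso.ncard_neighborSet (f : G ≃g H) (v : V) :
    (H.neighborSet (f v)).ncard = (G.neighborSet v).ncard := by
  rw [← Nat.card_coe_set_eq, ← Nat.card_coe_set_eq]
  exact (Nat.card_congr (f.mapNeighborSet v)).symm

lemma ncard_neighborSet_induce_of_subset {s : Set V} {v : s} (h : G.neighborSet v ⊆ s) :
    ((G.induce s).neighborSet v).ncard = (G.neighborSet v).ncard := by
  rw [neighborSet_induce]
  exact Set.ncard_preimage_of_injective_subset_range Subtype.val_injective (by simpa using h)

theorem exists_iso_apply_eq_of_induce_compl_pair {u v : V} (huv : u ≠ v)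
    (t : G.induce ({u, v}ᶜ : Set V) ≃g G.induce {u, v}ᶜ)
    (hu : ∀ w : ({u, v}ᶜ : Set V), G.Adj u w ↔ G.Adj v (t w))
    (hv : ∀ w : ({u, v}ᶜ : Set V), G.Adj v w ↔ G.Adj u (t w)) :
    ∃ φ : G ≃g G, φ u = v := by
  classical
  let φ : Equiv.Perm V :=
    (Equiv.swap u v).trans (Equiv.Perm.extendDomain t.toEquiv (Equiv.refl ({u, v}ᶜ : Set V)))
  have hφS : ∀ {w} (hw : w ∈ ({u, v}ᶜ : Set V)), φ w = t ⟨w, hw⟩ := fun {w} hw => by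
    have : w ≠ u ∧ w ≠ v := by simpa using hw
    simp only [φ, Equiv.trans_apply, Equiv.swap_apply_of_ne_of_ne this.1 this.2]
    exact Equiv.Perm.extendDomain_apply_subtype _ _ hw
  have hφu : φ u = v := by
    simp only [φ, Equiv.trans_apply, Equiv.swap_apply_left]
    exact Equiv.Perm.extendDomain_apply_not_subtype _ _ (by simp)
  have hφv : φ v = u := by
    simp only [φ, Equiv.trans_apply, Equiv.swap_apply_right]
    exact Equiv.Perm.extendDomain_apply_not_subtype _ _ (by simp)
  have hcases : ∀ a, a = u ∨ a = v ∨ a ∈ ({u, v}ᶜ : Set V) := fun a => by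
    by_cases a = u <;> by_cases a = v <;> simp_all
  refine ⟨⟨φ, fun {a b} => ?_⟩, hφu⟩
  rcases hcases a with rfl | rfl | ha <;> rcases hcases b with rfl | rfl | hb
  · simp [hφu]
  · rw [hφu, hφv, adj_comm]
  · rw [hφu, hφS hb, hu ⟨b, hb⟩]
  · rw [hφu, hφv, adj_comm]
  · simp [hφv]
  · rw [hφv, hφS hb, hv ⟨b, hb⟩]
  · rw [hφu, hφS ha, adj_comm, ← hu ⟨a, ha⟩, adj_comm]
  · rw [hφv, hφS ha, adj_comm, ← hv ⟨a, ha⟩, adj_comm]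
  · rw [hφS ha, hφS hb]
    exact t.map_adj_iff

theorem exists_iso_apply_eq_of_neighborSet_eq_singleton {u v : V} (hu : G.neighborSet u = {v})
    (hv : G.neighborSet v = {u}) : ∃ φ : G ≃g G, φ u = v := by
  have huv : u ≠ v := (show G.Adj u v by simp [← mem_neighborSet, hu]).ne
  refine exists_iso_apply_eq_of_induce_compl_pair huv .refl (fun w => ?_) (fun w => ?_) <;>
  · have hw := w.2
    simp only [Set.mem_compl_iff, Set.mem_insert_iff, Set.mem_singleton_iff, not_or] at hw
    simp [← mem_neighborSet, hu, hv, hw.1, hw.2]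

theorem IsTree.exists_iso_apply_eq_of_induce_compl_iso_apply_eq [Finite V] (hT : G.IsTree)
    {u v u₁ v₁ : V} (hu : G.neighborSet u = {u₁}) (hv : G.neighborSet v = {v₁}) (huv : u ≠ v)
    (hadj : ¬G.Adj u v) (g : G.induce {u}ᶜ ≃g G.induce {v}ᶜ)
    (hg : g ⟨v, huv.symm⟩ = ⟨u, huv⟩) : ∃ φ : G ≃g G, φ u = v := by
  have hu₁ : G.Adj u u₁ := by simp [← mem_neighborSet, hu]
  have hv₁ : G.Adj v v₁ := by simp [← mem_neighborSet, hv]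
  have hS : ∀ w, w ∈ ({u, v}ᶜ : Set V) ↔ w ≠ u ∧ w ≠ v := by simp
  have hu₁S : u₁ ∈ ({u, v}ᶜ : Set V) := (hS _).mpr ⟨hu₁.ne', fun h => hadj (h ▸ hu₁)⟩
  have hv₁S : v₁ ∈ ({u, v}ᶜ : Set V) := (hS _).mpr ⟨fun h => hadj (h ▸ hv₁).symm, hv₁.ne'⟩
  have hST : (G.induce {u, v}ᶜ).IsTree := by
    refine hT.induce_of_subsingleton_neighborSet (fun w hw => ?_) ⟨u₁, hu₁S⟩
    rcases Set.notMem_compl_iff.mp hw with rfl | rfl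
    · exact hu ▸ Set.subsingleton_singleton
    · exact hv ▸ Set.subsingleton_singleton
  let s : G.induce ({u, v}ᶜ : Set V) ≃g G.induce {u, v}ᶜ :=
    (induceComplInduceComplIso u ⟨v, huv.symm⟩ hS).symm.trans <|
      (g.induceComplSingleton hg).trans <|
        induceComplInduceComplIso v ⟨u, huv⟩ fun w => by rw [hS, and_comm]
  have hs : s ⟨v₁, hv₁S⟩ = ⟨u₁, hu₁S⟩ := by
    have : (G.induce {v}ᶜ).Adj (g ⟨v, huv.symm⟩) (g ⟨v₁, ((hS _).mp hv₁S).1⟩) :=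
      g.map_adj_iff.mpr hv₁
    rw [hg] at this
    have h : G.Adj u (g ⟨v₁, ((hS _).mp hv₁S).1⟩) := this
    rw [← mem_neighborSet, hu] at h
    exact Subtype.ext h
  obtain ⟨t, ht₁, ht₂⟩ := hST.exists_iso_swap s ⟨v₁, hv₁S⟩
  rw [hs] at ht₁ ht₂
  have hleaf : ∀ {a b : V} {x y : ({u, v}ᶜ : Set V)}, G.neighborSet a = {(x : V)} →
      G.neighborSet b = {(y : V)} → t x = y →
        ∀ w : ({u, v}ᶜ : Set V), G.Adj a w ↔ G.Adj b (t w) := by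
    intro a b x y ha hb hxy w
    rw [← mem_neighborSet, ha, ← mem_neighborSet, hb, Set.mem_singleton_iff,
      Set.mem_singleton_iff, ← hxy, Subtype.coe_inj, Subtype.coe_inj, EmbeddingLike.apply_eq_iff_eq]
  exact exists_iso_apply_eq_of_induce_compl_pair huv t (hleaf hu hv ht₂) (hleaf hv hu ht₁)

theorem IsTree.exists_iso_apply_eq_of_induce_compl_iso [Finite V] (hT : G.IsTree) {u v : V}
    (hu : (G.neighborSet u).ncard = 1) (hv : (G.neighborSet v).ncard = 1)
    (f : G.induce {u}ᶜ ≃g G.induce {v}ᶜ) : ∃ φ : G ≃g G, φ u = v := by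
  induction hn : Nat.card V using Nat.strong_induction_on generalizing V with
  | _ n ih =>
  obtain ⟨u₁, hu₁⟩ := Set.ncard_eq_one.mp hu
  obtain ⟨v₁, hv₁⟩ := Set.ncard_eq_one.mp hv
  rcases eq_or_ne u v with rfl | huv
  · exact ⟨.refl, rfl⟩
  by_cases hadj : G.Adj u v
  · have hvu₁ : v = u₁ := by simpa [← mem_neighborSet, hu₁] using hadj
    have huv₁ : u = v₁ := by simpa [← mem_neighborSet, hv₁] using hadj.symm
    exact exists_iso_apply_eq_of_neighborSet_eq_singleton (hvu₁ ▸ hu₁) (huv₁ ▸ hv₁)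
  obtain ⟨g, hg⟩ : ∃ g : G.induce {u}ᶜ ≃g G.induce {v}ᶜ, g ⟨v, huv.symm⟩ = ⟨u, huv⟩ := by
    by_cases hf : f ⟨v, huv.symm⟩ = ⟨u, huv⟩
    · exact ⟨f, hf⟩
    have hT' : (G.induce {v}ᶜ).IsTree := by
      refine hT.induce_of_subsingleton_neighborSet (fun w hw => ?_) ⟨u, huv⟩
      rw [Set.mem_singleton_iff.mp (Set.notMem_compl_iff.mp hw), hv₁]
      exact Set.subsingleton_singleton
    have hvu₁ : v ≠ u₁ := fun h => hadj (by rw [← mem_neighborSet, hu₁, h]; rfl)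
    have huv₁ : u ≠ v₁ := fun h => hadj (by rw [adj_comm, ← mem_neighborSet, hv₁, h]; rfl)
    have hu' : ((G.induce {v}ᶜ).neighborSet ⟨u, huv⟩).ncard = 1 := by
      rw [ncard_neighborSet_induce_of_subset (by simpa [hu₁] using hvu₁), hu]
    have hfv : ((G.induce {v}ᶜ).neighborSet (f ⟨v, huv.symm⟩)).ncard = 1 := by
      rw [f.ncard_neighborSet, ncard_neighborSet_induce_of_subset (by simpa [hv₁] using huv₁), hv]
    -- `(G - v) - u ≃g G - {u, v} ≃g (G - u) - v ≃g (G - v) - f v`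
    let e : (G.induce {v}ᶜ).induce {⟨u, huv⟩}ᶜ ≃g (G.induce {v}ᶜ).induce {f ⟨v, huv.symm⟩}ᶜ :=
      (induceComplInduceComplIso v ⟨u, huv⟩ (s := {u, v}ᶜ) (by simp [and_comm])).trans <|
        (induceComplInduceComplIso u ⟨v, huv.symm⟩ (by simp)).symm.trans
          (f.induceComplSingleton rfl)
    have hlt : Nat.card ({v}ᶜ : Set V) < n := by
      rw [← hn, Nat.card_coe_set_eq]
      exact Set.ncard_lt_card (Set.compl_ne_univ.mpr (Set.singleton_nonempty v))
    obtain ⟨β, hβ⟩ := ih _ hlt hT' hu' hfv e rfl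
    exact ⟨f.trans β.symm, by simp [← hβ]⟩
  exact hT.exists_iso_apply_eq_of_induce_compl_iso_apply_eq hu₁ hv₁ huv hadj g hg

end SimpleGraph

namespace ErnPaper

/-- Removal-similar endvertices of a finite tree are similar: if `u`, `v` are endvertices
with `T - u ≅ T - v`, then some automorphism of `T` maps `u` to `v`. -/
theorem stmt2 {V : Type} [Fintype V] (T : SimpleGraph V) (hT : T.IsTree) (u v : V)
    (hu : (T.neighborSet u).ncard = 1) (hv : (T.neighborSet v).ncard = 1)
    (h : Nonempty (T.induce ({u}ᶜ : Set V) ≃g T.induce ({v}ᶜ : Set V))) :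
    ∃ φ : T ≃g T, φ u = v := by
  obtain ⟨f⟩ := h
  exact hT.exists_iso_apply_eq_of_induce_compl_iso hu hv f

end ErnPaper
end

section
/- Let G be a finite simple graph with distinct edges e_1 and e_2. Suppose G − e_1 has exactly two connected components, both trees, of orders p_1 and p_2, and G − e_2 has exactly two connected components, both trees, of orders q_1 and q_2. If the pair {p_1, p_2} is not equal to the pair {q_1, q_2} (as unordered pairs), then G is a tree. -/
open SimpleGraph

namespace ErnPaper

/-- `G` has exactly two connected components, both of which are trees,
of orders `p₁` and `p₂`. -/
def TwoTreeComponents {V : Type} [Fintype V] (G : SimpleGraph V) (p1 p2 : ℕ) : Prop :=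
  ∃ c1 c2 : G.ConnectedComponent, c1 ≠ c2 ∧ (∀ c : G.ConnectedComponent, c = c1 ∨ c = c2) ∧
    (G.induce c1.supp).IsTree ∧ (G.induce c2.supp).IsTree ∧
    Nat.card c1.supp = p1 ∧ Nat.card c2.supp = p2

/-!
If deleting `e` from `G` leaves two trees and `e` is a bridge, then `e` joins the two trees and
`G` is a tree. Otherwise `G - e` has the same connected components as `G`, so the pair of orders
of the two trees is the pair of orders of the components of `G`. Hence if neither `e₁` nor `e₂` is
a bridge, the two pairs coincide.
-/

section

variable {V : Type} {G : SimpleGraph V}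

theorem isAcyclic_of_forall_isAcyclic_induce_supp
    (h : ∀ c : G.ConnectedComponent, (G.induce c.supp).IsAcyclic) : G.IsAcyclic := by
  classical
  intro v p hp
  have hsupp : ∀ x ∈ p.support, x ∈ (G.connectedComponentMk v).supp := fun x hx =>
    ConnectedComponent.sound (p.takeUntil x hx).reachable.symm
  refine h _ (p.induce _ hsupp) ?_
  rwa [← Walk.isCycle_map_iff_of_injective (f := (Embedding.induce _).toHom)
    Subtype.val_injective, Walk.map_induce]

theorem isAcyclic_of_isBridge {e : Sym2 V} (hb : G.IsBridge e)
    (h : (G.deleteEdges {e}).IsAcyclic) : G.IsAcyclic := by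
  intro v p hp
  have hedges : ∀ f ∈ p.edges, f ∉ ({e} : Set (Sym2 V)) := fun f hf hfe =>
    hb.notMem_edges_of_isCycle hp (Set.mem_singleton_iff.mp hfe ▸ hf)
  exact h (p.toDeleteEdges {e} hedges) (hp.toDeleteEdges G {e} hedges)

theorem reachable_deleteEdges_iff_of_not_isBridge {e : Sym2 V} (he : ¬G.IsBridge e) {u v : V} :
    (G.deleteEdges {e}).Reachable u v ↔ G.Reachable u v := by
  refine ⟨fun h => h.mono (deleteEdges_le _), fun h => ?_⟩
  have hadj {x y : V} (hxy : G.Adj x y) : (G.deleteEdges {e}).Reachable x y := by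
    by_cases hxe : s(x, y) = e
    · subst hxe
      simpa [isBridge_iff] using he
    · exact (deleteEdges_adj.mpr ⟨hxy, hxe⟩).reachable
  obtain ⟨p⟩ := h
  induction p with
  | nil => rfl
  | cons hxy _ ih => exact (hadj hxy).trans ih

theorem supp_connectedComponentMk_deleteEdges_of_not_isBridge {e : Sym2 V}
    (he : ¬G.IsBridge e) (v : V) :
    ((G.deleteEdges {e}).connectedComponentMk v).supp = (G.connectedComponentMk v).supp := by
  ext x
  simp only [ConnectedComponent.mem_supp_iff, ConnectedComponent.eq,
    reachable_deleteEdges_iff_of_not_isBridge he]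

end

namespace TwoTreeComponents

variable {V : Type} [Fintype V] {H : SimpleGraph V} {p1 p2 : ℕ}

theorem isAcyclic (h : TwoTreeComponents H p1 p2) : H.IsAcyclic := by
  obtain ⟨c1, c2, -, hall, ht1, ht2, -⟩ := h
  refine isAcyclic_of_forall_isAcyclic_induce_supp fun c => ?_
  rcases hall c with rfl | rfl
  exacts [ht1.isAcyclic, ht2.isAcyclic]

theorem reachable_or_reachable (h : TwoTreeComponents H p1 p2) {a b : V}
    (hab : ¬H.Reachable a b) (x : V) : H.Reachable x a ∨ H.Reachable x b := by
  obtain ⟨c1, c2, -, hall, -⟩ := h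
  simp only [← ConnectedComponent.eq] at hab ⊢
  have := hall (H.connectedComponentMk x)
  have := hall (H.connectedComponentMk a)
  have := hall (H.connectedComponentMk b)
  grind

theorem pair_eq (h : TwoTreeComponents H p1 p2) (v : V) :
    ({p1, p2} : Multiset ℕ) =
      {Nat.card (H.connectedComponentMk v).supp, Nat.card ↥(H.connectedComponentMk v).suppᶜ} := by
  obtain ⟨c1, c2, hne, hall, -, -, rfl, rfl⟩ := h
  have hc2 : c2.supp = c1.suppᶜ := by
    ext x
    simp only [Set.mem_compl_iff, ConnectedComponent.mem_supp_iff]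
    have := hall (H.connectedComponentMk x)
    grind
  rcases hall (H.connectedComponentMk v) with hv | hv
  · rw [hv, hc2]
  · rw [hv, hc2, compl_compl, Multiset.pair_comm]

end TwoTreeComponents

theorem isTree_of_isBridge {V : Type} [Fintype V] {G : SimpleGraph V} {e : Sym2 V}
    (he : e ∈ G.edgeSet) (hb : G.IsBridge e) {p1 p2 : ℕ}
    (h : TwoTreeComponents (G.deleteEdges {e}) p1 p2) : G.IsTree := by
  refine ⟨?_, isAcyclic_of_isBridge hb h.isAcyclic⟩
  obtain ⟨a, b⟩ := e
  have hle : G.deleteEdges {s(a, b)} ≤ G := deleteEdges_le _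
  have hreach (x : V) : G.Reachable x a := by
    rcases h.reachable_or_reachable (isBridge_iff.mp hb) x with hxa | hxb
    · exact hxa.mono hle
    · exact (hxb.mono hle).trans (G.mem_edgeSet.mp he).reachable.symm
  exact (connected_iff_exists_forall_reachable G).mpr ⟨a, fun x => (hreach x).symm⟩

theorem stmt5_general {V : Type} [Fintype V] (G : SimpleGraph V) (e1 e2 : Sym2 V)
    (he1 : e1 ∈ G.edgeSet) (he2 : e2 ∈ G.edgeSet)
    (p1 p2 q1 q2 : ℕ)
    (h1 : TwoTreeComponents (G.deleteEdges {e1}) p1 p2)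
    (h2 : TwoTreeComponents (G.deleteEdges {e2}) q1 q2)
    (hpq : ({p1, p2} : Multiset ℕ) ≠ ({q1, q2} : Multiset ℕ)) :
    G.IsTree := by
  by_cases hb1 : G.IsBridge e1
  · exact isTree_of_isBridge he1 hb1 h1
  by_cases hb2 : G.IsBridge e2
  · exact isTree_of_isBridge he2 hb2 h2
  refine absurd ?_ hpq
  rw [h1.pair_eq e1.out.1, h2.pair_eq e1.out.1,
    supp_connectedComponentMk_deleteEdges_of_not_isBridge hb1,
    supp_connectedComponentMk_deleteEdges_of_not_isBridge hb2]

/-- Molina's Lemma: if `G - e₁` has exactly two components, both trees, of orders `p₁, p₂`,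
and `G - e₂` has exactly two components, both trees, of orders `q₁, q₂`, and
`{p₁, p₂} ≠ {q₁, q₂}` as unordered pairs, then `G` is a tree. -/
theorem stmt5 {V : Type} [Fintype V] (G : SimpleGraph V) (e1 e2 : Sym2 V)
    (he1 : e1 ∈ G.edgeSet) (he2 : e2 ∈ G.edgeSet) (hne : e1 ≠ e2)
    (p1 p2 q1 q2 : ℕ)
    (h1 : TwoTreeComponents (G.deleteEdges {e1}) p1 p2)
    (h2 : TwoTreeComponents (G.deleteEdges {e2}) q1 q2)
    (hpq : ({p1, p2} : Multiset ℕ) ≠ ({q1, q2} : Multiset ℕ)) :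
    G.IsTree :=
  stmt5_general G e1 e2 he1 he2 p1 p2 q1 q2 h1 h2 hpq

end ErnPaper
end

section
/- For every integer s ≥ 3, the disjoint union C_s ∪ P_{s+1} of the cycle on s vertices and the path on s + 1 vertices is not isomorphic to the path P_{2s+1}, yet it has two distinct edges f_1 and f_2 such that deleting f_i (for i = 1, 2) yields a graph isomorphic to the disjoint union P_s ∪ P_{s+1}; consequently it has two edge-cards isomorphic to the two edge-cards of P_{2s+1} obtained by deleting each of the two edges incident to the central vertex of P_{2s+1}. -/
open SimpleGraph

namespace ErnPaper

/-! `C_s ∪ P_{s+1}` is disconnected, so it is not the path `P_{2s+1}`. Deleting any edge of a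
cycle `C_s` leaves a path `P_s`, since all such cards are rotations of one another; and cutting
`P_{2s+1}` at either edge incident to its central vertex also leaves `P_s ∪ P_{s+1}`. -/

theorem disjUnion_eq_sum {α β : Type} (G : SimpleGraph α) (H : SimpleGraph β) :
    disjUnion G H = G ⊕g H := by
  ext (a | a) (b | b) <;> simp [disjUnion, G.adj_comm, H.adj_comm] <;> exact Adj.ne

theorem sum_deleteEdges_map_inl {α β : Type*} (G : SimpleGraph α) (H : SimpleGraph β)
    (e : Sym2 α) : (G ⊕g H).deleteEdges {e.map Sum.inl} = G.deleteEdges {e} ⊕g H := by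
  induction e using Sym2.ind with
  | _ x y => ext (a | a) (b | b) <;> simp

def Iso.deleteEdges {α β : Type*} {G : SimpleGraph α} {H : SimpleGraph β} (φ : G ≃g H)
    (s : Set (Sym2 α)) : G.deleteEdges s ≃g H.deleteEdges (Sym2.map φ '' s) where
  toEquiv := φ.toEquiv
  map_rel_iff' {a b} := by
    change (H.deleteEdges _).Adj (φ a) (φ b) ↔ _
    rw [deleteEdges_adj, deleteEdges_adj, φ.map_adj_iff, ← Sym2.map_mk,
      (Sym2.map.injective φ.injective).mem_set_image]

def cycleGraphAddRight {n : ℕ} [NeZero n] (c : Fin n) : cycleGraph n ≃g cycleGraph n where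
  toEquiv := Equiv.addRight c
  map_rel_iff' := by simp [cycleGraph_adj']

theorem cycleGraph_adj_add_one {n : ℕ} [NeZero n] (hn : n ≠ 1) (u : Fin n) :
    (cycleGraph n).Adj u (u + 1) := by
  rw [cycleGraph_adj', add_sub_cancel_left, Fin.val_one',
    Nat.mod_eq_of_lt (Nat.one_lt_iff_ne_zero_and_ne_one.2 ⟨NeZero.ne n, hn⟩)]
  exact Or.inr rfl

theorem cycleGraph_deleteEdges_neg_one_zero {n : ℕ} [NeZero n] (hn : n ≠ 2) :
    (cycleGraph n).deleteEdges {s(-1, 0)} = pathGraph n := by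
  obtain ⟨m, rfl⟩ := Nat.exists_eq_add_one_of_ne_zero (NeZero.ne n)
  ext u v
  simp only [deleteEdges_adj, cycleGraph_adj', pathGraph_adj, Set.mem_singleton_iff,
    Sym2.eq_iff, Fin.ext_iff, Fin.coe_neg_one, Fin.val_zero]
  have := u.isLt
  have := v.isLt
  rcases lt_trichotomy u v with h | rfl | h
  · rw [Fin.coe_sub_iff_lt.2 h, Fin.coe_sub_iff_le.2 h.le]
    omega
  · simp
  · rw [Fin.coe_sub_iff_le.2 h.le, Fin.coe_sub_iff_lt.2 h]
    omega

def cycleGraphDeleteEdgesIso {n : ℕ} [NeZero n] (hn : n ≠ 2) (u : Fin n) :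
    (cycleGraph n).deleteEdges {s(u, u + 1)} ≃g pathGraph n := by
  have h := Iso.deleteEdges (cycleGraphAddRight (u + 1)) {s(-1, 0)}
  rw [Set.image_singleton, Sym2.map_mk, cycleGraph_deleteEdges_neg_one_zero hn] at h
  convert h.symm using 4 <;> simp [cycleGraphAddRight]

def sumPathGraphIsoDeleteEdges {m n N : ℕ} (h : m + n = N) (a b : Fin N) (ha : a.val + 1 = m)
    (hb : b.val = m) : pathGraph m ⊕g pathGraph n ≃g (pathGraph N).deleteEdges {s(a, b)} where
  toEquiv := finSumFinEquiv.trans (finCongr h)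
  map_rel_iff' := by
    subst h
    rintro (i | i) (j | j) <;> simp [pathGraph_adj, Fin.ext_iff] <;> omega

/-- For every `s ≥ 3`, the disjoint union `C_s ∪ P_{s+1}` is not isomorphic to `P_{2s+1}`,
yet it has two distinct edges whose deletion in each case yields a graph isomorphic to
`P_s ∪ P_{s+1}`; consequently it has two edge-cards isomorphic to the two edge-cards of
`P_{2s+1}` obtained by deleting each of the two edges incident to the central vertex. -/
theorem stmt16 (s : ℕ) (hs : 3 ≤ s) :
    ¬ Nonempty (disjUnion (cycleGraph s) (pathGraph (s + 1)) ≃g pathGraph (2 * s + 1)) ∧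
    ∃ f1 f2 : Sym2 (Fin s ⊕ Fin (s + 1)),
      f1 ∈ (disjUnion (cycleGraph s) (pathGraph (s + 1))).edgeSet ∧
      f2 ∈ (disjUnion (cycleGraph s) (pathGraph (s + 1))).edgeSet ∧
      f1 ≠ f2 ∧
      Nonempty ((disjUnion (cycleGraph s) (pathGraph (s + 1))).deleteEdges {f1} ≃g
        disjUnion (pathGraph s) (pathGraph (s + 1))) ∧
      Nonempty ((disjUnion (cycleGraph s) (pathGraph (s + 1))).deleteEdges {f2} ≃g
        disjUnion (pathGraph s) (pathGraph (s + 1))) ∧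
      Nonempty ((disjUnion (cycleGraph s) (pathGraph (s + 1))).deleteEdges {f1} ≃g
        (pathGraph (2 * s + 1)).deleteEdges
          {s((⟨s - 1, by omega⟩ : Fin (2 * s + 1)), (⟨s, by omega⟩ : Fin (2 * s + 1)))}) ∧
      Nonempty ((disjUnion (cycleGraph s) (pathGraph (s + 1))).deleteEdges {f2} ≃g
        (pathGraph (2 * s + 1)).deleteEdges
          {s((⟨s, by omega⟩ : Fin (2 * s + 1)), (⟨s + 1, by omega⟩ : Fin (2 * s + 1)))}) := by
  have : NeZero s := ⟨by omega⟩
  simp only [disjUnion_eq_sum]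
  have card (u : Fin s) : (cycleGraph s ⊕g pathGraph (s + 1)).deleteEdges
      {s(.inl u, .inl (u + 1))} ≃g pathGraph s ⊕g pathGraph (s + 1) := by
    rw [← Sym2.map_mk, sum_deleteEdges_map_inl]
    exact (cycleGraphDeleteEdgesIso (by omega) u).sumCongr .refl
  have edge (u : Fin s) :
      s(.inl u, .inl (u + 1)) ∈ (cycleGraph s ⊕g pathGraph (s + 1)).edgeSet :=
    cycleGraph_adj_add_one (by omega) u
  refine ⟨fun ⟨φ⟩ => not_connected_sum (φ.connected_iff.2 (pathGraph_connected _)),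
    _, _, edge 0, edge 1, ?_, ⟨card 0⟩, ⟨card 1⟩,
    ⟨(card 0).trans
      (sumPathGraphIsoDeleteEdges (by omega) _ _ (Nat.sub_add_cancel (by omega)) rfl)⟩,
    ⟨(card 1).trans (Iso.sumComm.trans (sumPathGraphIsoDeleteEdges (by omega) _ _ rfl rfl))⟩⟩
  simp [Fin.ext_iff, Fin.val_add, Nat.mod_eq_of_lt (show 1 < s by omega),
    Nat.mod_eq_of_lt (show 2 < s by omega)]

end ErnPaper
end

section
/- Let s ≥ 2 and let i, j be integers with 1 ≤ i ≤ j ≤ s and 2s − i − j ≥ 1. Then the spider S_{i, j, 2s−i−j} is a tree on 2s + 1 vertices that is not isomorphic to the path P_{2s+1}, yet it has two distinct edges f_1 and f_2 such that deleting f_1 yields a graph isomorphic to P_i ∪ P_{2s+1−i} and deleting f_2 yields a graph isomorphic to P_j ∪ P_{2s+1−j}; consequently it has edge-cards isomorphic to the edge-cards P_{2s+1} − e_i and P_{2s+1} − e_j of the path P_{2s+1} (where e_1, …, e_{2s} are the edges of P_{2s+1} in order along the path). -/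
open SimpleGraph

namespace ErnPaper

/-!
The spider is a tree: every vertex other than the centre has a parent one step closer to the
centre, and the parent edges are all the edges, so the connected spider has one edge fewer than
vertices. Its centre has three neighbours, which no vertex of a path has. Deleting the first edge
of the leg with `i` edges leaves that leg, a path `P_i`, and the other two legs joined through the
centre, a path on `2s + 1 - i` vertices; the same holds for `j`, and the card `P_{2s+1} - e_i` is
`P_i ∪ P_{2s+1-i}` as well.
-/

section Parent

variable {V : Type*} [Finite V] {G : SimpleGraph V}

theorem isTree_of_parent (root : V) (parent : V → V) (rank : V → ℕ)
    (hrank : ∀ v ≠ root, rank (parent v) < rank v)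
    (hadj : ∀ u v, G.Adj u v ↔ (v ≠ root ∧ u = parent v) ∨ (u ≠ root ∧ v = parent u)) :
    G.IsTree := by
  have hreach : ∀ v, G.Reachable v root := by
    intro v
    induction h : rank v using Nat.strong_induction_on generalizing v with
    | _ n ih =>
      by_cases hv : v = root
      · exact hv ▸ Reachable.refl _
      · exact (Adj.reachable ((hadj _ _).2 (Or.inr ⟨hv, rfl⟩))).trans
          (ih _ (h ▸ hrank v hv) _ rfl)
  let f : {v // v ≠ root} → G.edgeSet := fun v =>
    ⟨s(parent v, v), (hadj _ _).2 (Or.inl ⟨v.2, rfl⟩)⟩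
  have hf : Function.Bijective f := by
    refine ⟨fun v w hvw => ?_, ?_⟩
    · rcases Sym2.eq_iff.1 (congrArg Subtype.val hvw) with ⟨-, h⟩ | ⟨hv, hw⟩
      · exact Subtype.ext h
      · have hv' := hrank v v.2
        have hw' := hrank w w.2
        rw [hv] at hv'
        rw [← hw] at hw'
        omega
    · rintro ⟨e, he⟩
      induction e using Sym2.ind with
      | _ u v =>
        rcases (hadj u v).1 he with ⟨hv, rfl⟩ | ⟨hu, rfl⟩
        · exact ⟨⟨v, hv⟩, rfl⟩
        · exact ⟨⟨u, hu⟩, Subtype.ext Sym2.eq_swap⟩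
  rw [isTree_iff_connected_and_card]
  refine ⟨(connected_iff_exists_forall_reachable G).2 ⟨root, fun v => (hreach v).symm⟩, ?_⟩
  classical
  rw [← Nat.card_congr (Equiv.ofBijective f hf), ← Finite.card_option,
    Nat.card_congr (Equiv.optionSubtypeNe root)]

end Parent

theorem nonempty_iso_of_injective {V W : Type*} [Fintype V] [Fintype W] {G : SimpleGraph V}
    {H : SimpleGraph W} (f : V → W) (hf : Function.Injective f)
    (hcard : Fintype.card V = Fintype.card W) (hadj : ∀ u v, H.Adj (f u) (f v) ↔ G.Adj u v) :
    Nonempty (G ≃g H) :=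
  ⟨⟨Equiv.ofBijective f ((Fintype.bijective_iff_injective_and_card f).2 ⟨hf, hcard⟩),
    hadj _ _⟩⟩

theorem not_nonempty_iso_pathGraph_of_three_neighbors {V : Type*} {G : SimpleGraph V}
    {w a b c : V} (ha : G.Adj w a) (hb : G.Adj w b) (hc : G.Adj w c)
    (hab : a ≠ b) (hac : a ≠ c) (hbc : b ≠ c) (n : ℕ) :
    ¬ Nonempty (G ≃g pathGraph n) := by
  rintro ⟨φ⟩
  have ha := φ.map_adj_iff.2 ha
  have hb := φ.map_adj_iff.2 hb
  have hc := φ.map_adj_iff.2 hc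
  have hab := Fin.val_injective.ne (φ.injective.ne hab)
  have hac := Fin.val_injective.ne (φ.injective.ne hac)
  have hbc := Fin.val_injective.ne (φ.injective.ne hbc)
  rw [pathGraph_adj] at ha hb hc
  omega

theorem pathGraph_deleteEdges_iso_disjUnion (a b n : ℕ) (ha : 0 < a) (hb : 0 < b)
    (hn : a + b = n) :
    Nonempty (disjUnion (pathGraph a) (pathGraph b) ≃g (pathGraph n).deleteEdges
      {s((⟨a - 1, by omega⟩ : Fin n), (⟨a, by omega⟩ : Fin n))}) := by
  refine nonempty_iso_of_injective
    (Sum.elim (fun k => ⟨k, by omega⟩) (fun k => ⟨a + k, by omega⟩)) ?_ (by simp [hn]) ?_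
  · rintro (⟨k, hk⟩ | ⟨k, hk⟩) (⟨l, hl⟩ | ⟨l, hl⟩) h <;> simp [Fin.ext_iff] at h ⊢ <;> omega
  · rintro (⟨k, hk⟩ | ⟨k, hk⟩) (⟨l, hl⟩ | ⟨l, hl⟩) <;>
      simp [disjUnion, fromRel_adj, pathGraph_adj, deleteEdges_adj] <;> omega

section Spider

variable {p q r : ℕ}

def spiderParent : Unit ⊕ (Fin p ⊕ Fin q ⊕ Fin r) → Unit ⊕ (Fin p ⊕ Fin q ⊕ Fin r)
  | Sum.inl _ => Sum.inl ()
  | Sum.inr (Sum.inl ⟨k, h⟩) =>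
      if hk : k = 0 then Sum.inl () else Sum.inr (Sum.inl ⟨k - 1, by omega⟩)
  | Sum.inr (Sum.inr (Sum.inl ⟨k, h⟩)) =>
      if hk : k = 0 then Sum.inl () else Sum.inr (Sum.inr (Sum.inl ⟨k - 1, by omega⟩))
  | Sum.inr (Sum.inr (Sum.inr ⟨k, h⟩)) =>
      if hk : k = 0 then Sum.inl () else Sum.inr (Sum.inr (Sum.inr ⟨k - 1, by omega⟩))

def spiderDepth : Unit ⊕ (Fin p ⊕ Fin q ⊕ Fin r) → ℕ
  | Sum.inl _ => 0
  | Sum.inr (Sum.inl k) => k + 1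
  | Sum.inr (Sum.inr (Sum.inl k)) => k + 1
  | Sum.inr (Sum.inr (Sum.inr k)) => k + 1

theorem spiderDepth_spiderParent_lt {v : Unit ⊕ (Fin p ⊕ Fin q ⊕ Fin r)} (hv : v ≠ Sum.inl ()) :
    spiderDepth (spiderParent v) < spiderDepth v := by
  rcases v with ⟨⟩ | ⟨k, hk⟩ | ⟨k, hk⟩ | ⟨k, hk⟩
  · exact absurd rfl hv
  all_goals simp only [spiderParent]; split_ifs <;> simp [spiderDepth]; omega

theorem spider_adj_iff (u v : Unit ⊕ (Fin p ⊕ Fin q ⊕ Fin r)) :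
    (spider p q r).Adj u v ↔ (v ≠ Sum.inl () ∧ u = spiderParent v) ∨
      (u ≠ Sum.inl () ∧ v = spiderParent u) := by
  rcases u with _ | ⟨k, hk⟩ | ⟨k, hk⟩ | ⟨k, hk⟩ <;>
    rcases v with _ | ⟨l, hl⟩ | ⟨l, hl⟩ | ⟨l, hl⟩ <;>
    simp only [spiderParent] <;> (try split_ifs) <;> simp_all [spider, fromRel_adj] <;> omega

theorem spider_isTree : (spider p q r).IsTree :=
  isTree_of_parent _ spiderParent spiderDepth (fun _ => spiderDepth_spiderParent_lt) spider_adj_iff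

theorem spider_not_nonempty_iso_pathGraph (hp : 0 < p) (hq : 0 < q) (hr : 0 < r) (n : ℕ) :
    ¬ Nonempty (spider p q r ≃g pathGraph n) :=
  not_nonempty_iso_pathGraph_of_three_neighbors (w := Sum.inl ())
    (a := Sum.inr (Sum.inl ⟨0, hp⟩)) (b := Sum.inr (Sum.inr (Sum.inl ⟨0, hq⟩)))
    (c := Sum.inr (Sum.inr (Sum.inr ⟨0, hr⟩))) (by simp [spider]) (by simp [spider])
    (by simp [spider]) (by simp) (by simp) (by simp) n

theorem spider_deleteEdges_iso_disjUnion_fst (hp : 0 < p) {n : ℕ} (hn : q + r + 1 = n) :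
    Nonempty ((spider p q r).deleteEdges {s(Sum.inl (), Sum.inr (Sum.inl ⟨0, hp⟩))} ≃g
      disjUnion (pathGraph p) (pathGraph n)) := by
  refine nonempty_iso_of_injective (fun v => match v with
    | Sum.inl _ => Sum.inr ⟨q, by omega⟩
    | Sum.inr (Sum.inl k) => Sum.inl k
    | Sum.inr (Sum.inr (Sum.inl ⟨k, _⟩)) => Sum.inr ⟨q - 1 - k, by omega⟩
    | Sum.inr (Sum.inr (Sum.inr ⟨k, _⟩)) => Sum.inr ⟨q + 1 + k, by omega⟩) ?_
    (by simp only [Fintype.card_sum, Fintype.card_unit, Fintype.card_fin]; omega) ?_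
  · rintro (_ | ⟨k, hk⟩ | ⟨k, hk⟩ | ⟨k, hk⟩) (_ | ⟨l, hl⟩ | ⟨l, hl⟩ | ⟨l, hl⟩) h <;>
      simp_all [Fin.ext_iff] <;> omega
  · rintro (_ | ⟨k, hk⟩ | ⟨k, hk⟩ | ⟨k, hk⟩) (_ | ⟨l, hl⟩ | ⟨l, hl⟩ | ⟨l, hl⟩) <;>
      simp [spider, disjUnion, fromRel_adj, pathGraph_adj, deleteEdges_adj] <;> omega

theorem spider_deleteEdges_iso_disjUnion_snd (hq : 0 < q) {n : ℕ} (hn : p + r + 1 = n) :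
    Nonempty ((spider p q r).deleteEdges {s(Sum.inl (), Sum.inr (Sum.inr (Sum.inl ⟨0, hq⟩)))} ≃g
      disjUnion (pathGraph q) (pathGraph n)) := by
  refine nonempty_iso_of_injective (fun v => match v with
    | Sum.inl _ => Sum.inr ⟨p, by omega⟩
    | Sum.inr (Sum.inl ⟨k, _⟩) => Sum.inr ⟨p - 1 - k, by omega⟩
    | Sum.inr (Sum.inr (Sum.inl k)) => Sum.inl k
    | Sum.inr (Sum.inr (Sum.inr ⟨k, _⟩)) => Sum.inr ⟨p + 1 + k, by omega⟩) ?_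
    (by simp only [Fintype.card_sum, Fintype.card_unit, Fintype.card_fin]; omega) ?_
  · rintro (_ | ⟨k, hk⟩ | ⟨k, hk⟩ | ⟨k, hk⟩) (_ | ⟨l, hl⟩ | ⟨l, hl⟩ | ⟨l, hl⟩) h <;>
      simp_all [Fin.ext_iff] <;> omega
  · rintro (_ | ⟨k, hk⟩ | ⟨k, hk⟩ | ⟨k, hk⟩) (_ | ⟨l, hl⟩ | ⟨l, hl⟩ | ⟨l, hl⟩) <;>
      simp [spider, disjUnion, fromRel_adj, pathGraph_adj, deleteEdges_adj] <;> omega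

end Spider

/-- For `s ≥ 2` and `1 ≤ i ≤ j ≤ s` with `2s - i - j ≥ 1`, the spider `S_{i,j,2s-i-j}` is a
tree on `2s + 1` vertices not isomorphic to `P_{2s+1}`, yet it has two distinct edges
`f₁, f₂` such that deleting `f₁` yields a graph isomorphic to `P_i ∪ P_{2s+1-i}` and
deleting `f₂` yields a graph isomorphic to `P_j ∪ P_{2s+1-j}`; consequently its edge-cards
are isomorphic to the edge-cards `P_{2s+1} - eᵢ` and `P_{2s+1} - eⱼ` of the path
(where `eᵢ` joins the `(i-1)`-st and `i`-th vertices of the path). -/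
theorem stmt17 (s i j : ℕ) (hi : 1 ≤ i) (hij : i ≤ j)
    (hr : 1 ≤ 2 * s - i - j) :
    (spider i j (2 * s - i - j)).IsTree ∧
    Fintype.card (Unit ⊕ (Fin i ⊕ Fin j ⊕ Fin (2 * s - i - j))) = 2 * s + 1 ∧
    ¬ Nonempty (spider i j (2 * s - i - j) ≃g pathGraph (2 * s + 1)) ∧
    ∃ f1 f2 : Sym2 (Unit ⊕ (Fin i ⊕ Fin j ⊕ Fin (2 * s - i - j))),
      f1 ∈ (spider i j (2 * s - i - j)).edgeSet ∧
      f2 ∈ (spider i j (2 * s - i - j)).edgeSet ∧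
      f1 ≠ f2 ∧
      Nonempty ((spider i j (2 * s - i - j)).deleteEdges {f1} ≃g
        disjUnion (pathGraph i) (pathGraph (2 * s + 1 - i))) ∧
      Nonempty ((spider i j (2 * s - i - j)).deleteEdges {f2} ≃g
        disjUnion (pathGraph j) (pathGraph (2 * s + 1 - j))) ∧
      Nonempty ((spider i j (2 * s - i - j)).deleteEdges {f1} ≃g
        (pathGraph (2 * s + 1)).deleteEdges
          {s((⟨i - 1, by omega⟩ : Fin (2 * s + 1)), (⟨i, by omega⟩ : Fin (2 * s + 1)))}) ∧
      Nonempty ((spider i j (2 * s - i - j)).deleteEdges {f2} ≃g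
        (pathGraph (2 * s + 1)).deleteEdges
          {s((⟨j - 1, by omega⟩ : Fin (2 * s + 1)), (⟨j, by omega⟩ : Fin (2 * s + 1)))}) := by
  obtain ⟨δ₁⟩ := spider_deleteEdges_iso_disjUnion_fst (q := j) (r := 2 * s - i - j)
    (by omega : 0 < i) (by omega : _ = 2 * s + 1 - i)
  obtain ⟨δ₂⟩ := spider_deleteEdges_iso_disjUnion_snd (p := i) (r := 2 * s - i - j)
    (by omega : 0 < j) (by omega : _ = 2 * s + 1 - j)
  obtain ⟨π₁⟩ := pathGraph_deleteEdges_iso_disjUnion i (2 * s + 1 - i) (2 * s + 1)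
    (by omega) (by omega) (by omega)
  obtain ⟨π₂⟩ := pathGraph_deleteEdges_iso_disjUnion j (2 * s + 1 - j) (2 * s + 1)
    (by omega) (by omega) (by omega)
  refine ⟨spider_isTree,
    by simp only [Fintype.card_sum, Fintype.card_unit, Fintype.card_fin]; omega,
    spider_not_nonempty_iso_pathGraph (by omega) (by omega) (by omega) _, _, _,
    by simp [spider], by simp [spider], by simp, ⟨δ₁⟩, ⟨δ₂⟩, ⟨δ₁.trans π₁⟩, ⟨δ₂.trans π₂⟩⟩

end ErnPaper
end
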